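/- Let q ≥ 1 be an integer, let m ≥ 1 be a real number, let δ be a real number with 0 < δ ≤ 1/2, and let M = (M_1, …, M_q) ∈ ℕ^q satisfy |M_i/m − 1| ≤ δ for every i. Then −Σ_{i=1}^q log( e^{−m} m^{M_i} / M_i! ) ≤ q·( m·δ² + (1/2)·log(2m) + 1 ). -/

import Mathlib

/-!
Each factor is a Poisson probability, so its negative logarithm is `m - N log m + log N!`.
The upper Stirling bound `log N! ≤ N log N - N + (log N) / 2 + 1`, which follows from the
monotonicity of the Stirling sequence, turns this into `N log (N / m) - (N - m) + (log N) / 2 + 1`.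
By `log t ≤ t - 1` the relative-entropy part is at most the chi-square term `(N - m)² / m ≤ m δ²`,
and `N ≤ 2 m` bounds `(log N) / 2`.
-/

open Real
open scoped Nat

theorem Stirling.log_factorial_le (n : ℕ) :
    log n ! ≤ n * log n - n + log n / 2 + 1 := by
  cases n with
  | zero => simp
  | succ k =>
    have h := Stirling.log_stirlingSeq'_antitone (Nat.zero_le k)
    simp only [Function.comp_apply, Stirling.stirlingSeq_one,
      Stirling.log_stirlingSeq_formula] at h
    have hn : (0 : ℝ) < (k + 1 : ℕ) := by positivity
    rw [log_div (exp_pos 1).ne' (by positivity), log_exp, log_sqrt zero_le_two,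
      log_mul two_ne_zero hn.ne', log_div hn.ne' (exp_pos 1).ne', log_exp] at h
    linarith

theorem mul_log_div_sub_le_sq_div {x m : ℝ} (hx : 0 ≤ x) (hm : 0 < m) :
    x * log (x / m) - (x - m) ≤ (x - m) ^ 2 / m := by
  have hlog : x * log (x / m) ≤ x * (x / m - 1) := by
    rcases hx.eq_or_lt with rfl | hx
    · simp
    · exact mul_le_mul_of_nonneg_left (log_le_sub_one_of_pos (by positivity)) hx.le
  have hchi : x * (x / m - 1) - (x - m) = (x - m) ^ 2 / m := by
    field_simp
  linarith

theorem neg_log_poisson_le {m : ℝ} (hm : 0 < m) (N : ℕ) :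
    -log (exp (-m) * m ^ N / N !) ≤ (N - m) ^ 2 / m + log N / 2 + 1 := by
  have hlog : log (exp (-m) * m ^ N / N !) = -m + N * log m - log N ! := by
    rw [log_div (by positivity) (by positivity), log_mul (exp_ne_zero _) (by positivity),
      log_exp, log_pow]
  have hsplit : (N : ℝ) * log (N / m) = N * log N - N * log m := by
    rcases eq_or_ne (N : ℝ) 0 with h0 | h0
    · simp [h0]
    · rw [log_div h0 hm.ne']
      ring
  have := mul_log_div_sub_le_sq_div (Nat.cast_nonneg N) hm
  have := Stirling.log_factorial_le N
  linarith

theorem neg_log_poisson_le_of_abs_div_sub_one_le {m δ : ℝ} (hm : 0 < m) (hδ : δ < 1) {N : ℕ}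
    (hN : |(N : ℝ) / m - 1| ≤ δ) :
    -log (exp (-m) * m ^ N / N !) ≤ m * δ ^ 2 + log (2 * m) / 2 + 1 := by
  obtain ⟨hlo, hhi⟩ := abs_le.mp hN
  have hchi : ((N : ℝ) - m) ^ 2 / m ≤ m * δ ^ 2 := by
    have hsq : ((N : ℝ) / m - 1) ^ 2 ≤ δ ^ 2 := by
      rw [← sq_abs]
      exact pow_le_pow_left₀ (abs_nonneg _) hN 2
    calc ((N : ℝ) - m) ^ 2 / m = m * ((N : ℝ) / m - 1) ^ 2 := by field_simp
      _ ≤ m * δ ^ 2 := mul_le_mul_of_nonneg_left hsq hm.le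
  have hNpos : (0 : ℝ) < N := (div_pos_iff_of_pos_right hm).mp (by linarith)
  have hN2m : (N : ℝ) ≤ 2 * m := (div_le_iff₀ hm).mp (by linarith)
  have := log_le_log hNpos hN2m
  have := neg_log_poisson_le hm N
  linarith

theorem stmt_7_general (q : ℕ) (m : ℝ) (hm : 1 ≤ m)
    (δ : ℝ) (hδ1 : δ ≤ 1 / 2)
    (M : Fin q → ℕ) (hM : ∀ i, |(M i : ℝ) / m - 1| ≤ δ) :
    -(∑ i : Fin q,
        Real.log (Real.exp (-m) * m ^ (M i) / (Nat.factorial (M i))))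
      ≤ (q : ℝ) * (m * δ ^ 2 + (1 / 2) * Real.log (2 * m) + 1) := by
  rw [← Finset.sum_neg_distrib]
  calc ∑ i, -log (exp (-m) * m ^ M i / (M i)!)
      ≤ ∑ _i : Fin q, (m * δ ^ 2 + log (2 * m) / 2 + 1) :=
        Finset.sum_le_sum fun i _ =>
          neg_log_poisson_le_of_abs_div_sub_one_le (by linarith) (by linarith) (hM i)
    _ = q * (m * δ ^ 2 + 1 / 2 * log (2 * m) + 1) := by
        rw [Finset.sum_const, Finset.card_univ, Fintype.card_fin, nsmul_eq_mul]
        ring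

/-- entropy bound for a δ-good configuration of `q` blocks
(Lemma 5.3 of the paper). -/
theorem stmt_7 (q : ℕ) (hq : 1 ≤ q) (m : ℝ) (hm : 1 ≤ m)
    (δ : ℝ) (hδ0 : 0 < δ) (hδ1 : δ ≤ 1 / 2)
    (M : Fin q → ℕ) (hM : ∀ i, |(M i : ℝ) / m - 1| ≤ δ) :
    -(∑ i : Fin q,
        Real.log (Real.exp (-m) * m ^ (M i) / (Nat.factorial (M i))))
      ≤ (q : ℝ) * (m * δ ^ 2 + (1 / 2) * Real.log (2 * m) + 1) :=
  stmt_7_general q m hm δ hδ1 M hM
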